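/- arXiv:2102.12981 — 3 statements merged into one kernel-verified Lean document; each statement's English description precedes it below -/
import Mathlib

section
/- Safety theorem for Black-Box Simplex: given an initial state x₀ and an initial permanently safe command sequence s₀, if the decision module's update function is correct (it only replaces the stored sequence with a proposed sequence that is permanently safe from the current state; otherwise it keeps the stored sequence), then every state reached during the system's execution is admissible, regardless of the outputs of the advanced and baseline controllers. -/
variable {X U W : Type*}

/-- Decision module step: output head of stored sequence; keep sequence if length 1, else drop head. -/
def dmStep [Inhabited U] (s : List U) : U × List U :=
  (s.headI, if s.length = 1 then s else s.tail)

/-- Infinite execution driven by the stored command sequence (dm_step semantics),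
with disturbance sequence `w`. Returns (state, stored sequence) at each step. -/
def execW [Inhabited U] (f : X → U → W → X) (w : ℕ → W) (x : X) (s : List U) :
    ℕ → X × List U
  | 0 => (x, s)
  | n + 1 =>
    let p := execW f w x s n
    (f p.1 (dmStep p.2).1 (w n), (dmStep p.2).2)

/-- `s` is a permanently safe command sequence from `x`: the dm_step-driven execution
is admissible at every step, for every choice of disturbances. -/
def PermSafe [Inhabited U] (Adm : X → Prop) (f : X → U → W → X) (x : X) (s : List U) : Prop :=
  s ≠ [] ∧ ∀ w : ℕ → W, ∀ n : ℕ, Adm (execW f w x s n).1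

/-- System execution: at step `i`, the (untrusted) controllers propose sequence `t i`;
`dmu` either accepts it or keeps the stored sequence; then one dm_step and one plant step. -/
def sysExec [Inhabited U] (f : X → U → W → X) (dmu : X → List U → List U → List U)
    (t : ℕ → List U) (w : ℕ → W) (x₀ : X) (s₀ : List U) : ℕ → X × List U
  | 0 => (x₀, s₀)
  | i + 1 =>
    let p := sysExec f dmu t w x₀ s₀ i
    let s' := dmu p.1 p.2 (t i)
    (f p.1 (dmStep s').1 (w i), (dmStep s').2)

lemma execW_shift [Inhabited U] (f : X → U → W → X) (w0 : W) (w' : ℕ → W)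
    (x : X) (s : List U) (n : ℕ) :
    execW f (fun k => Nat.rec w0 (fun m _ => w' m) k) x s (n + 1)
      = execW f w' (f x (dmStep s).1 w0) (dmStep s).2 n := by
  induction n with
  | zero => simp [execW]
  | succ n ih =>
    show (_, _) = (_, _)
    rw [ih]

lemma permSafe_step [Inhabited U] (Adm : X → Prop) (f : X → U → W → X)
    (x : X) (s : List U) (h : PermSafe Adm f x s) (w0 : W) :
    PermSafe Adm f (f x (dmStep s).1 w0) (dmStep s).2 := by
  obtain ⟨hne, hadm⟩ := h
  constructor
  · simp only [dmStep]
    split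
    · exact hne
    · rename_i hlen
      cases s with
      | nil => exact absurd rfl hne
      | cons a l =>
        cases l with
        | nil => simp at hlen
        | cons b l => simp
  · intro w' n
    have := hadm (fun k => Nat.rec w0 (fun m _ => w' m) k) (n + 1)
    rwa [execW_shift] at this

/-- Safety: with an initial permanently safe sequence and a correct decision module
(it either rejects, keeping the stored sequence, or accepts only permanently safe sequences),
every state reached is admissible, regardless of the proposed sequences `t` and disturbances `w`. -/
theorem blackbox_simplex_safety [Inhabited U] (Adm : X → Prop) (f : X → U → W → X)
    (dmu : X → List U → List U → List U) (t : ℕ → List U) (w : ℕ → W)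
    (x₀ : X) (s₀ : List U)
    (hinit : PermSafe Adm f x₀ s₀)
    (hcorrect : ∀ x s tp, dmu x s tp = s ∨ PermSafe Adm f x (dmu x s tp)) :
    ∀ i : ℕ, Adm (sysExec f dmu t w x₀ s₀ i).1 := by
  have key : ∀ i, PermSafe Adm f (sysExec f dmu t w x₀ s₀ i).1 (sysExec f dmu t w x₀ s₀ i).2 := by
    intro i
    induction i with
    | zero => exact hinit
    | succ i ih =>
      set p := sysExec f dmu t w x₀ s₀ i
      have hs' : PermSafe Adm f p.1 (dmu p.1 p.2 (t i)) := by
        rcases hcorrect p.1 p.2 (t i) with h | h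
        · rwa [h]
        · exact h
      exact permSafe_step Adm f p.1 _ hs' (w i)
  intro i
  exact (key i).2 w 0
end

section
/- Transparency theorem for Black-Box Simplex: if at every reachable state xᵢ the advanced controller's command zᵢ = ac(xᵢ) is recoverable, the look-ahead baseline controller is optimal (whenever some permanently safe sequence from xᵢ starts with zᵢ, the baseline controller outputs a permanently safe sequence starting with zᵢ), and the decision module is optimal (it accepts a proposed sequence if and only if it is permanently safe from the current state), then the command applied to the plant at every step equals the advanced controller's command zᵢ. -/
variable {X U W : Type*}

/-- System execution where the look-ahead baseline controller `bc` proposes a sequence from the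
current state at each step. -/
def sysExecBC [Inhabited U] (f : X → U → W → X) (dmu : X → List U → List U → List U)
    (bc : X → List U) (w : ℕ → W) (x₀ : X) (s₀ : List U) : ℕ → X × List U
  | 0 => (x₀, s₀)
  | i + 1 =>
    let p := sysExecBC f dmu bc w x₀ s₀ i
    let s' := dmu p.1 p.2 (bc p.1)
    (f p.1 (dmStep s').1 (w i), (dmStep s').2)

/-- Transparency: if at every encountered state there is a permanently safe
sequence starting with the advanced controller's command, the look-ahead baseline controller is
optimal, and the decision module is optimal, then the command applied at every step is the
advanced controller's command. -/
theorem blackbox_simplex_transparency [Inhabited U] (Adm : X → Prop) (f : X → U → W → X)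
    (ac : X → U) (bc : X → List U) (dmu : X → List U → List U → List U)
    (w : ℕ → W) (x₀ : X) (s₀ : List U)
    (hdm_opt : ∀ x s tp, (PermSafe Adm f x tp → dmu x s tp = tp) ∧
      (¬ PermSafe Adm f x tp → dmu x s tp = s))
    (hbc_opt : ∀ x, (∃ tp, PermSafe Adm f x tp ∧ tp.headI = ac x) →
      PermSafe Adm f x (bc x) ∧ (bc x).headI = ac x)
    (hrec : ∀ i : ℕ, ∃ tp, PermSafe Adm f (sysExecBC f dmu bc w x₀ s₀ i).1 tp ∧
      tp.headI = ac (sysExecBC f dmu bc w x₀ s₀ i).1) :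
    ∀ i : ℕ,
      (dmStep (dmu (sysExecBC f dmu bc w x₀ s₀ i).1 (sysExecBC f dmu bc w x₀ s₀ i).2
        (bc (sysExecBC f dmu bc w x₀ s₀ i).1))).1 = ac (sysExecBC f dmu bc w x₀ s₀ i).1 := by
  intro i
  set x := (sysExecBC f dmu bc w x₀ s₀ i).1
  obtain ⟨hps, hh⟩ := hbc_opt x (hrec i)
  rw [(hdm_opt x _ (bc x)).1 hps]
  simpa [dmStep] using hh
end

section
/- Safety of the default fallback: in the Black-Box Simplex execution semantics with a correct decision module, if the stored sequence sᵢ at step i is permanently safe from xᵢ and the decision module rejects every proposed sequence from step i onward, then the system remains admissible at all future steps, with the commands applied being exactly the commands of sᵢ followed by infinite repetition of its last command. -/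
/-! When every proposal is rejected, the system run is literally the `dmStep`-driven run of `s₀`,
so permanent safety of `s₀` gives admissibility. The stored sequence after `n` steps is the
`n`-fold iterate of "drop the head unless it is the last command", whose head is the `n`-th
command of `s₀`, or its last command once `s₀` is used up. -/

variable {X U W : Type*}

section

variable [Inhabited U]

lemma dmStep_snd_ne_nil {s : List U} (hs : s ≠ []) : (dmStep s).2 ≠ [] := by
  rcases s with _ | ⟨a, _ | ⟨b, t⟩⟩ <;> simp_all [dmStep]

lemma headI_iterate_dmStep_snd {s : List U} (hs : s ≠ []) (n : ℕ) :
    ((fun s => (dmStep s).2)^[n] s).headI = s.getD n s.getLast! := by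
  induction n generalizing s with
  | zero =>
    rcases s with _ | ⟨a, t⟩
    · exact absurd rfl hs
    · rfl
  | succ n ih =>
    rw [Function.iterate_succ_apply, ih (dmStep_snd_ne_nil hs)]
    rcases s with _ | ⟨a, _ | ⟨b, t⟩⟩
    · exact absurd rfl hs
    · simp [dmStep]
    · simp [dmStep]

lemma execW_snd (f : X → U → W → X) (w : ℕ → W) (x : X) (s : List U) (n : ℕ) :
    (execW f w x s n).2 = (fun s => (dmStep s).2)^[n] s := by
  induction n with
  | zero => rfl
  | succ n ih => rw [execW, Function.iterate_succ_apply', ih]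

lemma sysExec_eq_execW_of_reject (f : X → U → W → X)
    (dmu : X → List U → List U → List U) (t : ℕ → List U) (w : ℕ → W) (x₀ : X) (s₀ : List U)
    (hreject : ∀ j : ℕ, dmu (sysExec f dmu t w x₀ s₀ j).1 (sysExec f dmu t w x₀ s₀ j).2 (t j)
      = (sysExec f dmu t w x₀ s₀ j).2) (n : ℕ) :
    sysExec f dmu t w x₀ s₀ n = execW f w x₀ s₀ n := by
  induction n with
  | zero => rfl
  | succ n ih =>
    have hrej := hreject n
    rw [ih] at hrej
    rw [sysExec, execW, ih, hrej]

end

theorem fallback_safety_general [Inhabited U] (Adm : X → Prop) (f : X → U → W → X)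
    (dmu : X → List U → List U → List U) (t : ℕ → List U) (w : ℕ → W)
    (x₀ : X) (s₀ : List U)
    (hsafe : PermSafe Adm f x₀ s₀)
    (hreject : ∀ j : ℕ, dmu (sysExec f dmu t w x₀ s₀ j).1 (sysExec f dmu t w x₀ s₀ j).2 (t j)
      = (sysExec f dmu t w x₀ s₀ j).2) :
    ∀ n : ℕ, Adm (sysExec f dmu t w x₀ s₀ n).1 ∧
      (dmStep (dmu (sysExec f dmu t w x₀ s₀ n).1 (sysExec f dmu t w x₀ s₀ n).2 (t n))).1
        = s₀.getD n s₀.getLast! := by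
  intro n
  have hrun := sysExec_eq_execW_of_reject f dmu t w x₀ s₀ hreject n
  refine ⟨hrun ▸ hsafe.2 w n, ?_⟩
  rw [hreject n, hrun, execW_snd]
  exact headI_iterate_dmStep_snd hsafe.1 n

/-- Safety of the default fallback: with a correct decision module, if the stored
sequence `s₀` at the current step is permanently safe from `x₀` and the decision module rejects
every proposal from this step onward, then all future states are admissible and the applied
commands are exactly the commands of `s₀` followed by infinite repetition of its last command. -/
theorem fallback_safety [Inhabited U] (Adm : X → Prop) (f : X → U → W → X)
    (dmu : X → List U → List U → List U) (t : ℕ → List U) (w : ℕ → W)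
    (x₀ : X) (s₀ : List U)
    (hcorrect : ∀ x s tp, dmu x s tp = s ∨ PermSafe Adm f x (dmu x s tp))
    (hsafe : PermSafe Adm f x₀ s₀)
    (hreject : ∀ j : ℕ, dmu (sysExec f dmu t w x₀ s₀ j).1 (sysExec f dmu t w x₀ s₀ j).2 (t j)
      = (sysExec f dmu t w x₀ s₀ j).2) :
    ∀ n : ℕ, Adm (sysExec f dmu t w x₀ s₀ n).1 ∧
      (dmStep (dmu (sysExec f dmu t w x₀ s₀ n).1 (sysExec f dmu t w x₀ s₀ n).2 (t n))).1
        = s₀.getD n s₀.getLast! :=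
  fallback_safety_general Adm f dmu t w x₀ s₀ hsafe hreject
end
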